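/- Let G, H, K be finite groups, let X be a bifree (G,H)-biset and Y a bifree (H,K)-biset. Let U ≤ G and W ≤ K be isomorphic subgroups and let γ: W → U be an isomorphism. Then |(X ×_H Y)^{Δ(U,γ,W)}| = (1/|H|) · Σ_{V ≤ H} Σ_{(α,β) ∈ I(U,V)×I(V,W), α∘β = γ} |X^{Δ(U,α,V)}| · |Y^{Δ(V,β,W)}|, where the outer sum runs over all subgroups V of H. -/

import Mathlib

open scoped Classical

/-- The `H`-orbit relation on `X × Y` whose quotient is the tensor product
`X ×_H Y` of a `(G,H)`-biset `X` and an `(H,K)`-biset `Y`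
(`h • (x,y) = (x h⁻¹, h y)`, i.e. `((1,h) • x, (h,1) • y)`). -/
def tensSetoid (G H K X Y : Type*) [Group G] [Group H] [Group K]
    [MulAction (G × H) X] [MulAction (H × K) Y] : Setoid (X × Y) where
  r a b := ∃ h : H, ((((1 : G), h) : G × H) • a.1, ((h, (1 : K)) : H × K) • a.2) = b
  iseqv := by
    constructor
    · intro a; exact ⟨1, Prod.ext (one_smul (G × H) a.1) (one_smul (H × K) a.2)⟩
    · rintro a b ⟨h, rfl⟩
      exact ⟨h⁻¹, by simp [smul_smul]; exact Prod.ext (one_smul (G × H) _) (one_smul (H × K) _)⟩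
    · rintro a b c ⟨h, rfl⟩ ⟨h', rfl⟩
      exact ⟨h' * h, by simp [smul_smul]⟩

/-!
Count the tuples `(V, α, β, x, y)` with `α ∘ β = γ`, `x ∈ X^{Δ(U,α,V)}` and `y ∈ Y^{Δ(V,β,W)}`
in two ways. Grouping by `(V, α, β)` gives the sum on the right. On the other hand such a tuple
is determined by `(x, y)`: since `H` acts freely on `X`, `β w` is the unique `h` with
`(γ w, h) • x = x`. The pairs that occur are exactly those whose class in `X ×_H Y` is
`Δ(U,γ,W)`-fixed (freeness of `K` on `Y` makes `w ↦ h` injective, so its image is a subgroup `V`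
isomorphic to `W`), and every class has `|H|` representatives.
-/

theorem card_subtype_mem_eq_card_mul_of_card_fiber {α β : Type*} [Finite α] [Finite β]
    (f : α → β) (s : Set β) {n : ℕ} (hn : ∀ b ∈ s, Nat.card {a // f a = b} = n) :
    Nat.card {a // f a ∈ s} = Nat.card s * n := by
  have := Fintype.ofFinite s
  rw [← Nat.card_congr (Equiv.sigmaSubtypeFiberEquivSubtype f (q := (· ∈ s)) fun _ => Iff.rfl),
    Nat.card_sigma, Finset.sum_congr rfl fun (b : s) _ => hn b b.2, Finset.sum_const,
    Finset.card_univ, smul_eq_mul, Nat.card_eq_fintype_card]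

theorem card_sigma_eq_finsum {ι : Type*} {κ : ι → Type*} [Finite ι] [∀ i, Finite (κ i)] :
    Nat.card (Σ i, κ i) = ∑ᶠ i, Nat.card (κ i) := by
  have := Fintype.ofFinite ι
  rw [Nat.card_sigma, finsum_eq_sum_of_fintype]

theorem card_subtype_and_prod {X Y : Type*} [Finite X] [Finite Y] (c : Prop) [Decidable c]
    (P : X → Prop) (Q : Y → Prop) :
    Nat.card {p : X × Y // c ∧ P p.1 ∧ Q p.2} =
      if c then Nat.card {x // P x} * Nat.card {y // Q y} else 0 := by
  split_ifs with hc
  · rw [← Nat.card_prod]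
    exact Nat.card_congr ((Equiv.subtypeEquivRight fun p => by simp [hc]).trans
      Equiv.subtypeProdEquivProd)
  · have : IsEmpty {p : X × Y // c ∧ P p.1 ∧ Q p.2} := ⟨fun p => hc p.2.1⟩
    exact Nat.card_of_isEmpty

theorem Subgroup.mem_iff_exists_coe_mulEquiv_apply {H W : Type*} [Group H] [Group W]
    {V : Subgroup H} (β : W ≃* V) {h : H} : h ∈ V ↔ ∃ w, (β w : H) = h :=
  ⟨fun hh => ⟨β.symm ⟨h, hh⟩, by simp⟩, by rintro ⟨w, rfl⟩; exact (β w).2⟩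

theorem MulEquiv.eq_symm_trans_of_trans_eq {A B C : Type*} [Mul A] [Mul B] [Mul C]
    {β : A ≃* B} {α : B ≃* C} {γ : A ≃* C} (h : β.trans α = γ) : α = β.symm.trans γ := by
  subst h; ext b; simp

def IsRightFree (G H X : Type*) [Group G] [Group H] [MulAction (G × H) X] : Prop :=
  ∀ (x : X) (h : H), (((1 : G), h) : G × H) • x = x → h = 1

section Bisets

variable {G H K X Y : Type*} [Group G] [Group H] [Group K]
  [MulAction (G × H) X] [MulAction (H × K) Y]

theorem IsRightFree.eq_of_smul_eq_smul (hX : IsRightFree G H X) {x : X} {g : G} {h₁ h₂ : H}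
    (e : ((g, h₁) : G × H) • x = ((g, h₂) : G × H) • x) : h₁ = h₂ := by
  have : (((1 : G), h₂⁻¹ * h₁) : G × H) • x = x := by
    calc (((1 : G), h₂⁻¹ * h₁) : G × H) • x = ((g, h₂)⁻¹ * (g, h₁) : G × H) • x := by simp
      _ = x := by rw [mul_smul, e, inv_smul_smul]
  exact (inv_mul_eq_one.mp (hX x _ this)).symm

theorem tensSetoid_mk_eq_mk_iff {p p' : X × Y} :
    Quotient.mk (tensSetoid G H K X Y) p = Quotient.mk _ p' ↔
      ∃ h : H, ((((1 : G), h) : G × H) • p.1, ((h, (1 : K)) : H × K) • p.2) = p' :=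
  Quotient.eq

theorem card_fiber_tensSetoid (hX : IsRightFree G H X) (q : Quotient (tensSetoid G H K X Y)) :
    Nat.card {p : X × Y // Quotient.mk (tensSetoid G H K X Y) p = q} = Nat.card H := by
  symm
  refine Nat.card_eq_of_bijective (fun h : H =>
    ⟨((((1 : G), h) : G × H) • q.out.1, ((h, (1 : K)) : H × K) • q.out.2),
      (tensSetoid_mk_eq_mk_iff.mpr ⟨h, rfl⟩).symm.trans q.out_eq⟩) ⟨fun h₁ h₂ e => ?_, fun p => ?_⟩
  · exact hX.eq_of_smul_eq_smul (congrArg (·.1.1) e)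
  · obtain ⟨h, hp⟩ := tensSetoid_mk_eq_mk_iff.mp (q.out_eq.trans p.2.symm)
    exact ⟨h, Subtype.ext hp⟩

variable {U : Subgroup G} {W : Subgroup K}

variable (H X Y) in
def deltaFixedPoints (γ : W ≃* U) : Set (Quotient (tensSetoid G H K X Y)) :=
  {q | ∀ (w : W) (x : X) (y : Y), Quotient.mk (tensSetoid G H K X Y) (x, y) = q →
    Quotient.mk (tensSetoid G H K X Y)
      ((((γ w : U) : G), (1 : H)) • x, (((1 : H), (w : K)) : H × K) • y) = q}

theorem mk_mem_deltaFixedPoints_iff (γ : W ≃* U) {x : X} {y : Y} :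
    Quotient.mk (tensSetoid G H K X Y) (x, y) ∈ deltaFixedPoints H X Y γ ↔
      ∀ w : W, ∃ h : H, ((((γ w : U) : G), h) : G × H) • x = x ∧
        ((h, (w : K)) : H × K) • y = y := by
  constructor
  · intro hq w
    obtain ⟨h, hh⟩ := tensSetoid_mk_eq_mk_iff.mp (hq w x y rfl)
    simp only [smul_smul, Prod.mk_mul_mk, one_mul, mul_one, Prod.mk.injEq] at hh
    exact ⟨h, hh⟩
  · intro hfix w x' y' hq
    obtain ⟨h₀, hh₀⟩ := tensSetoid_mk_eq_mk_iff.mp hq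
    obtain ⟨rfl, rfl⟩ := Prod.mk.inj hh₀
    obtain ⟨h, hx, hy⟩ := hfix w
    refine tensSetoid_mk_eq_mk_iff.mpr ⟨h * h₀, Prod.ext ?_ ?_⟩
    · rw [← hx]
      simp [smul_smul]
    · rw [← hy]
      simp [smul_smul]

variable (H X Y) in
structure FactoredFixedPair (γ : W ≃* U) where
  V : Subgroup H
  α : V ≃* U
  β : W ≃* V
  x : X
  y : Y
  trans_eq : β.trans α = γ
  smul_x : ∀ v : V, ((((α v : U) : G), (v : H)) : G × H) • x = x
  smul_y : ∀ w : W, ((((β w : V) : H), (w : K)) : H × K) • y = y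

namespace FactoredFixedPair

variable {γ : W ≃* U}

theorem smul_x_gamma_beta (s : FactoredFixedPair H X Y γ) (w : W) :
    ((((γ w : U) : G), ((s.β w : s.V) : H)) : G × H) • s.x = s.x := by
  rw [← congrArg (fun e : W ≃* U => ((e w : U) : G)) s.trans_eq]
  exact s.smul_x (s.β w)

theorem mk_mem_deltaFixedPoints (s : FactoredFixedPair H X Y γ) :
    Quotient.mk (tensSetoid G H K X Y) (s.x, s.y) ∈ deltaFixedPoints H X Y γ :=
  (mk_mem_deltaFixedPoints_iff γ).mpr fun w => ⟨s.β w, s.smul_x_gamma_beta w, s.smul_y w⟩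

theorem pair_injective (hX : IsRightFree G H X) :
    Function.Injective fun s : FactoredFixedPair H X Y γ => (s.x, s.y) := by
  rintro ⟨V, α, β, x, y, hγ, hx, hy⟩ ⟨V', α', β', x', y', hγ', hx', hy'⟩ hxy
  obtain ⟨rfl, rfl⟩ := Prod.mk.inj hxy
  have hβ : ∀ w, (β w : H) = (β' w : H) := fun w =>
    hX.eq_of_smul_eq_smul <|
      (smul_x_gamma_beta ⟨V, α, β, x, y, hγ, hx, hy⟩ w).trans
        (smul_x_gamma_beta ⟨V', α', β', x, y, hγ', hx', hy'⟩ w).symm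
  obtain rfl : V = V' := by
    ext h
    simp only [Subgroup.mem_iff_exists_coe_mulEquiv_apply β,
      Subgroup.mem_iff_exists_coe_mulEquiv_apply β', hβ]
  obtain rfl : β = β' := MulEquiv.ext fun w => Subtype.ext (hβ w)
  obtain rfl : α = α' := by
    rw [MulEquiv.eq_symm_trans_of_trans_eq hγ, MulEquiv.eq_symm_trans_of_trans_eq hγ']
  rfl

theorem exists_pair_eq (hX : IsRightFree G H X) (hY : IsRightFree H K Y) {x : X} {y : Y}
    (hq : Quotient.mk (tensSetoid G H K X Y) (x, y) ∈ deltaFixedPoints H X Y γ) :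
    ∃ s : FactoredFixedPair H X Y γ, (s.x, s.y) = (x, y) := by
  choose φ hφx hφy using (mk_mem_deltaFixedPoints_iff γ).mp hq
  let f : W →* H := MonoidHom.mk' φ fun a b => hX.eq_of_smul_eq_smul <| (hφx (a * b)).trans <| by
    rw [show ((((γ (a * b) : U) : G), φ a * φ b) : G × H) =
        ((((γ a : U) : G), φ a) : G × H) * ((((γ b : U) : G), φ b) : G × H) by simp,
      mul_smul, hφx b, hφx a]
  have hf : Function.Injective f := (injective_iff_map_eq_one f).mpr fun w hw =>
    Subtype.ext <| hY y w <| (show φ w = 1 from hw) ▸ hφy w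
  let β := MonoidHom.ofInjective hf
  refine ⟨⟨f.range, β.symm.trans γ, β, x, y, by ext; simp, fun v => ?_, hφy⟩, rfl⟩
  have hv : (v : H) = φ (β.symm v) := by
    conv_lhs => rw [← β.apply_symm_apply v]
    rfl
  rw [hv]
  exact hφx (β.symm v)

def equivSigma : FactoredFixedPair H X Y γ ≃
    Σ V : Subgroup H, Σ α : V ≃* U, Σ β : W ≃* V,
      {p : X × Y // β.trans α = γ ∧
        (∀ v : V, ((((α v : U) : G), (v : H)) : G × H) • p.1 = p.1) ∧
        (∀ w : W, ((((β w : V) : H), (w : K)) : H × K) • p.2 = p.2)} where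
  toFun s := ⟨s.V, s.α, s.β, (s.x, s.y), s.trans_eq, s.smul_x, s.smul_y⟩
  invFun t := ⟨t.1, t.2.1, t.2.2.1, t.2.2.2.1.1, t.2.2.2.1.2, t.2.2.2.2.1, t.2.2.2.2.2.1,
    t.2.2.2.2.2.2⟩
  left_inv _ := rfl
  right_inv _ := rfl

theorem card_eq_card_deltaFixedPoints_mul [Finite X] [Finite Y] (hX : IsRightFree G H X)
    (hY : IsRightFree H K Y) :
    Nat.card (FactoredFixedPair H X Y γ) = Nat.card (deltaFixedPoints H X Y γ) * Nat.card H := by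
  rw [← card_subtype_mem_eq_card_mul_of_card_fiber (Quotient.mk _) _
    fun q _ => card_fiber_tensSetoid hX q]
  refine Nat.card_eq_of_bijective (fun s => ⟨(s.x, s.y), s.mk_mem_deltaFixedPoints⟩)
    ⟨fun s t e => pair_injective hX (congrArg Subtype.val e), fun ⟨(x, y), hq⟩ => ?_⟩
  obtain ⟨s, hs⟩ := exists_pair_eq hX hY hq
  exact ⟨s, Subtype.ext hs⟩

theorem card_eq_finsum [Finite H] [Finite X] [Finite Y] :
    Nat.card (FactoredFixedPair H X Y γ) =
      ∑ᶠ (V : Subgroup H), ∑ᶠ (α : V ≃* U), ∑ᶠ (β : W ≃* V),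
        if β.trans α = γ then
          Nat.card {x : X | ∀ v : V, ((((α v : U) : G), (v : H)) : G × H) • x = x} *
          Nat.card {y : Y | ∀ w : W, ((((β w : V) : H), (w : K)) : H × K) • y = y}
        else 0 := by
  simp only [Nat.card_congr equivSigma, card_sigma_eq_finsum]
  exact finsum_congr fun V => finsum_congr fun α => finsum_congr fun β =>
    card_subtype_and_prod _ (fun x => ∀ v : V, ((((α v : U) : G), (v : H)) : G × H) • x = x)
      (fun y => ∀ w : W, ((((β w : V) : H), (w : K)) : H × K) • y = y)

end FactoredFixedPair

end Bisets

theorem stmt5_general {G H K : Type*} [Group G] [Group H] [Group K] [Finite H]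
    (X Y : Type*) [Finite X] [Finite Y] [MulAction (G × H) X] [MulAction (H × K) Y]
    (hX2 : ∀ (x : X) (h : H), (((1 : G), h) : G × H) • x = x → h = 1)
    (hY2 : ∀ (y : Y) (k : K), (((1 : H), k) : H × K) • y = y → k = 1)
    (U : Subgroup G) (W : Subgroup K) (γ : ↥W ≃* ↥U) :
    (Nat.card {q : Quotient (tensSetoid G H K X Y) |
        ∀ (w : ↥W) (x : X) (y : Y), Quotient.mk (tensSetoid G H K X Y) (x, y) = q →
          Quotient.mk (tensSetoid G H K X Y)
            ((((γ w : ↥U) : G), (1 : H)) • x, (((1 : H), (w : K)) : H × K) • y) = q} : ℚ)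
    = (1 / (Nat.card H : ℚ)) *
      ∑ᶠ (V : Subgroup H), ∑ᶠ (α : ↥V ≃* ↥U), ∑ᶠ (β : ↥W ≃* ↥V),
        (if β.trans α = γ then
          (Nat.card {x : X | ∀ v : ↥V, ((((α v : ↥U) : G), (v : H)) : G × H) • x = x} : ℚ) *
          (Nat.card {y : Y | ∀ w : ↥W, ((((β w : ↥V) : H), (w : K)) : H × K) • y = y} : ℚ)
        else 0) := by
  have hcount := (FactoredFixedPair.card_eq_card_deltaFixedPoints_mul (γ := γ) hX2 hY2).symm.trans
    FactoredFixedPair.card_eq_finsum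
  have hH : (Nat.card H : ℚ) ≠ 0 := Nat.cast_ne_zero.mpr Nat.card_pos.ne'
  rw [one_div, inv_mul_eq_div, eq_div_iff hH]
  exact_mod_cast hcount

/-- for bifree bisets `X` (a `(G,H)`-biset) and `Y` (an
`(H,K)`-biset), isomorphic subgroups `U ≤ G`, `W ≤ K` and an isomorphism
`γ : W → U`:
`|(X ×_H Y)^{Δ(U,γ,W)}| = (1/|H|) · Σ_{V ≤ H} Σ_{(α,β) ∈ I(U,V)×I(V,W), α∘β=γ}
|X^{Δ(U,α,V)}|·|Y^{Δ(V,β,W)}|`.  Here `X ×_H Y` is the quotient of `X × Y` by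
`tensSetoid`, on which `(g,k)` acts by `[x,y] ↦ [(g,1)•x, (1,k)•y]`, and
`I(U,V)` is the set of group isomorphisms `V → U`. -/
theorem stmt5 {G H K : Type*} [Group G] [Group H] [Group K]
    [Finite G] [Finite H] [Finite K]
    (X Y : Type*) [Finite X] [Finite Y] [MulAction (G × H) X] [MulAction (H × K) Y]
    (hX1 : ∀ (x : X) (g : G), ((g, (1 : H)) : G × H) • x = x → g = 1)
    (hX2 : ∀ (x : X) (h : H), (((1 : G), h) : G × H) • x = x → h = 1)
    (hY1 : ∀ (y : Y) (h : H), ((h, (1 : K)) : H × K) • y = y → h = 1)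
    (hY2 : ∀ (y : Y) (k : K), (((1 : H), k) : H × K) • y = y → k = 1)
    (U : Subgroup G) (W : Subgroup K) (γ : ↥W ≃* ↥U) :
    (Nat.card {q : Quotient (tensSetoid G H K X Y) |
        ∀ (w : ↥W) (x : X) (y : Y), Quotient.mk (tensSetoid G H K X Y) (x, y) = q →
          Quotient.mk (tensSetoid G H K X Y)
            ((((γ w : ↥U) : G), (1 : H)) • x, (((1 : H), (w : K)) : H × K) • y) = q} : ℚ)
    = (1 / (Nat.card H : ℚ)) *
      ∑ᶠ (V : Subgroup H), ∑ᶠ (α : ↥V ≃* ↥U), ∑ᶠ (β : ↥W ≃* ↥V),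
        (if β.trans α = γ then
          (Nat.card {x : X | ∀ v : ↥V, ((((α v : ↥U) : G), (v : H)) : G × H) • x = x} : ℚ) *
          (Nat.card {y : Y | ∀ w : ↥W, ((((β w : ↥V) : H), (w : K)) : H × K) • y = y} : ℚ)
        else 0) :=
  stmt5_general X Y hX2 hY2 U W γ
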